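/- Fix n ≥ 1 and d = 2n + 1, and let λ_k = 2k + n, ρ ∈ [-1/(d+1), 0). Let z = λ + β + iτ with λ = λ_{k0}, |β| ≤ 1, 0 < |τ| ≤ 1, and set δ(z) = dist(z, {λ_k}). Then there is a constant C such that for all t ∈ ℝ∖{0}: Σ_{k=0}^∞ λ_k^ρ · e^{-Im(√(z - λ_k)) |t|} / |z - λ_k|^{1/2} ≤ C ( |t|^{-1-2ρ} + k₀^ρ (k₀^{1/2} + δ(z)^{-1/2}) ). -/

import Mathlib

/-- The principal branch of the complex square root mapping into the closed
upper half-plane. -/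
noncomputable def upperSqrt (w : ℂ) : ℂ :=
  if 0 ≤ (w ^ (2⁻¹ : ℂ)).im then w ^ (2⁻¹ : ℂ) else -(w ^ (2⁻¹ : ℂ))


lemma upperSqrt_im_nonneg (w : ℂ) : 0 ≤ (upperSqrt w).im := by
  unfold upperSqrt
  split_ifs with h
  · exact h
  · simp only [Complex.neg_im]; linarith [not_le.1 h]

lemma cpow_half_sq {w : ℂ} (hw : w ≠ 0) : (w ^ (2⁻¹ : ℂ)) ^ 2 = w := by
  rw [Complex.cpow_def_of_ne_zero hw, sq, ← Complex.exp_add]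
  rw [show Complex.log w * 2⁻¹ + Complex.log w * 2⁻¹ = Complex.log w by ring]
  exact Complex.exp_log hw

lemma upperSqrt_sq {w : ℂ} (hw : w ≠ 0) : (upperSqrt w) ^ 2 = w := by
  unfold upperSqrt
  split_ifs with h
  · exact cpow_half_sq hw
  · rw [neg_sq]; exact cpow_half_sq hw

lemma upperSqrt_im_ge {w : ℂ} (hw : w.im ≠ 0) {c : ℝ} (hc : 0 ≤ c) (h : c ≤ -w.re) :
    Real.sqrt c ≤ (upperSqrt w).im := by
  have hw0 : w ≠ 0 := fun h0 => hw (by simp [h0])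
  have hsq := upperSqrt_sq hw0
  set u := upperSqrt w with hu
  have hre : w.re = u.re * u.re - u.im * u.im := by
    rw [← hsq]; simp [sq, Complex.mul_re]
  have h2 : c ≤ u.im ^ 2 := by nlinarith [sq_nonneg u.re]
  calc Real.sqrt c ≤ Real.sqrt (u.im ^ 2) := Real.sqrt_le_sqrt h2
    _ = |u.im| := Real.sqrt_sq_eq_abs _
    _ = u.im := abs_of_nonneg (upperSqrt_im_nonneg w)


lemma sumPow {q : ℝ} (hq1 : -1 < q) (hq0 : q < 0) (M : ℕ) :
    ∑ j ∈ Finset.range M, ((j : ℝ) + 1) ^ q ≤ (M : ℝ) ^ (1 + q) / (1 + q) := by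
  have hp : (0:ℝ) < 1 + q := by linarith
  induction M with
  | zero => simp [Real.zero_rpow (by linarith : (1+q) ≠ 0)]
  | succ M ih =>
    rw [Finset.sum_range_succ]
    have key : (M : ℝ) ^ (1+q) + (1+q) * ((M:ℝ)+1) ^ q ≤ ((M:ℝ)+1) ^ (1+q) := by
      rcases Nat.eq_zero_or_pos M with rfl | hM
      · norm_num
        rw [Real.zero_rpow (by linarith : (1+q) ≠ 0)]
        linarith
      · set y : ℝ := (M:ℝ) + 1 with hy
        have hy1 : (1:ℝ) ≤ (M:ℝ) := by exact_mod_cast hM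
        have hy2 : (2:ℝ) ≤ y := by simp [hy]; linarith
        have hy0 : (0:ℝ) < y := by linarith
        have hb := rpow_one_add_le_one_add_mul_self
          (s := -1/y) (by rw [neg_div, neg_le_neg_iff]; rw [div_le_one hy0]; linarith)
          (p := 1+q) (by linarith) (by linarith)
        have heq : 1 + (-1/y) = (y - 1)/y := by field_simp; ring
        rw [heq] at hb
        have hyp : (0:ℝ) < y ^ (1+q) := Real.rpow_pos_of_pos hy0 _
        have hdiv : ((y-1)/y) ^ (1+q) = (y-1) ^ (1+q) / y ^ (1+q) :=
          Real.div_rpow (by linarith) (by linarith) _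
        rw [hdiv] at hb
        have hb2 : (y-1) ^ (1+q) ≤ (1 + (1+q) * (-1/y)) * y ^ (1+q) := by
          rw [div_le_iff₀ hyp] at hb; exact hb
        have hys : y ^ (1+q) / y = y ^ q := by
          rw [← Real.rpow_sub_one (ne_of_gt hy0) (1+q)]; norm_num
        have hexp : (1 + (1+q) * (-1/y)) * y ^ (1+q) = y ^ (1+q) - (1+q) * y ^ q := by
          rw [← hys]; field_simp; ring
        rw [hexp] at hb2
        have hMy : (M:ℝ) = y - 1 := by rw [hy]; ring
        rw [hMy]; linarith
    have hc : ((M:ℕ) + 1 : ℝ) = (M:ℝ) + 1 := by push_cast; ring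
    calc ∑ j ∈ Finset.range M, ((j : ℝ) + 1) ^ q + ((M:ℝ)+1) ^ q
        ≤ (M : ℝ) ^ (1 + q) / (1 + q) + ((M:ℝ)+1) ^ q := by linarith
      _ = ((M : ℝ) ^ (1 + q) + (1+q) * ((M:ℝ)+1) ^ q) / (1 + q) := by field_simp
      _ ≤ ((M:ℝ)+1) ^ (1+q) / (1 + q) := by gcongr
      _ = ((M + 1 : ℕ) : ℝ) ^ (1+q) / (1+q) := by push_cast; ring_nf

lemma expCube {x : ℝ} (hx : 0 < x) : Real.exp (-x) ≤ 27 / x ^ 3 := by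
  have h1 : x / 3 ≤ Real.exp (x/3) := by linarith [Real.add_one_le_exp (x/3)]
  have h2 : (x/3) ^ 3 ≤ Real.exp (x/3) ^ 3 :=
    pow_le_pow_left₀ (by positivity) h1 3
  have h3 : Real.exp (x/3) ^ 3 = Real.exp x := by
    rw [← Real.exp_nat_mul]; ring_nf
  have h4 : x ^ 3 / 27 ≤ Real.exp x := by
    rw [← h3]; calc x^3/27 = (x/3)^3 := by ring
      _ ≤ _ := h2
  rw [Real.exp_neg]
  rw [inv_eq_one_div, div_le_div_iff₀ (Real.exp_pos x) (by positivity)]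
  nlinarith [Real.exp_pos x]


-- tail of 1/m^2 type sums: ∑_{i<L} (M+i+1)^{-2} ≤ 1/M  (as real powers)
lemma teleSum (M : ℕ) (hM : 1 ≤ M) (L : ℕ) :
    ∑ i ∈ Finset.range L, (((M : ℝ) + i + 1) ^ 2)⁻¹ ≤ 1 / (M : ℝ) := by
  have key : ∀ i ∈ Finset.range L, (((M : ℝ) + i + 1) ^ 2)⁻¹ ≤
      1/((M:ℝ)+i) - 1/((M:ℝ)+i+1) := by
    intro i _
    have h1 : (1:ℝ) ≤ (M:ℝ) + i := by
      have : (1:ℝ) ≤ (M:ℝ) := by exact_mod_cast hM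
      have : (0:ℝ) ≤ (i:ℝ) := by positivity
      linarith
    rw [div_sub_div _ _ (by linarith) (by linarith), inv_eq_one_div]
    have heq : (1:ℝ) * ((M:ℝ)+i+1) - ((M:ℝ)+i) * 1 = 1 := by ring
    rw [heq]
    apply div_le_div_of_nonneg_left (by norm_num) (by positivity)
    nlinarith
  calc ∑ i ∈ Finset.range L, (((M : ℝ) + i + 1) ^ 2)⁻¹
      ≤ ∑ i ∈ Finset.range L, (1/((M:ℝ)+i) - 1/((M:ℝ)+i+1)) := Finset.sum_le_sum key
    _ = ∑ i ∈ Finset.range L,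
          ((fun i : ℕ => 1/((M:ℝ)+i)) i - (fun i : ℕ => 1/((M:ℝ)+i)) (i+1)) := by
        refine Finset.sum_congr rfl fun i _ => ?_
        push_cast; ring
    _ = 1/((M:ℝ)+(0:ℕ)) - 1/((M:ℝ)+L) := Finset.sum_range_sub' (fun i : ℕ => 1/((M:ℝ)+i)) L
    _ ≤ 1 / (M:ℝ) := by
        have h1 : (0:ℝ) ≤ 1/((M:ℝ)+L) := by positivity
        have h2 : (M:ℝ)+(0:ℕ) = (M:ℝ) := by norm_num
        rw [h2]; linarith

lemma teleSum2 (L : ℕ) :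
    ∑ j ∈ Finset.range L, (((j : ℝ) + 1) ^ 2)⁻¹ ≤ 2 := by
  have key : ∀ j ∈ Finset.range L, (((j : ℝ) + 1) ^ 2)⁻¹ ≤
      2/((j:ℝ)+1) - 2/((j:ℝ)+2) := by
    intro j _
    have h0 : (0:ℝ) ≤ (j:ℝ) := by positivity
    rw [div_sub_div _ _ (by linarith) (by linarith), inv_eq_one_div]
    have heq : (2:ℝ) * ((j:ℝ)+2) - ((j:ℝ)+1) * 2 = 2 := by ring
    rw [heq]
    rw [div_le_div_iff₀ (by positivity) (by positivity)]
    nlinarith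
  calc ∑ j ∈ Finset.range L, (((j : ℝ) + 1) ^ 2)⁻¹
      ≤ ∑ j ∈ Finset.range L, (2/((j:ℝ)+1) - 2/((j:ℝ)+2)) := Finset.sum_le_sum key
    _ = ∑ j ∈ Finset.range L,
          ((fun j : ℕ => 2/((j:ℝ)+1)) j - (fun j : ℕ => 2/((j:ℝ)+1)) (j+1)) := by
        refine Finset.sum_congr rfl fun j _ => ?_
        push_cast; ring
    _ = 2/(((0:ℕ):ℝ)+1) - 2/((L:ℝ)+1) := Finset.sum_range_sub' (fun j : ℕ => 2/((j:ℝ)+1)) L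
    _ ≤ 2 := by
        have : (0:ℝ) ≤ 2/((L:ℝ)+1) := by positivity
        norm_num; linarith



-- pointwise bound
lemma ptBound {ρ s : ℝ} (hρ2 : ρ < 0) (hs : 0 < s) (x : ℝ) (hx : 1 ≤ x) :
    x ^ (ρ - 1/2) * Real.exp (-(Real.sqrt x * s)) ≤ 27 * x ^ (ρ - 2) * (s ^ 3)⁻¹ := by
  have hx0 : (0:ℝ) < x := by linarith
  have hsx : 0 < Real.sqrt x * s := by
    have := Real.sqrt_pos.2 hx0; positivity
  have he := expCube hsx
  have hcube : (Real.sqrt x * s) ^ 3 = x ^ ((3:ℝ)/2) * s ^ 3 := by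
    rw [mul_pow]
    congr 1
    rw [Real.sqrt_eq_rpow, ← Real.rpow_natCast (x ^ ((1:ℝ)/2)) 3,
      ← Real.rpow_mul hx0.le]
    norm_num
  rw [hcube] at he
  calc x ^ (ρ - 1/2) * Real.exp (-(Real.sqrt x * s))
      ≤ x ^ (ρ - 1/2) * (27 / (x ^ ((3:ℝ)/2) * s ^ 3)) := by
        apply mul_le_mul_of_nonneg_left he (by positivity)
    _ = 27 * (x ^ (ρ - 1/2) / x ^ ((3:ℝ)/2)) * (s ^ 3)⁻¹ := by ring
    _ = 27 * x ^ (ρ - 2) * (s ^ 3)⁻¹ := by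
        rw [← Real.rpow_sub hx0, show ρ - 1/2 - (3:ℝ)/2 = ρ - 2 by ring]

lemma tailSum {ρ : ℝ} (hρ1 : -(1/4 : ℝ) ≤ ρ) (hρ2 : ρ < 0) {s : ℝ} (hs : 0 < s) (L : ℕ) :
    ∑ j ∈ Finset.range L, ((j:ℝ)+1) ^ (ρ - 1/2) * Real.exp (-(Real.sqrt ((j:ℝ)+1) * s))
      ≤ 54 * s ^ (-1-2*ρ) := by
  have hterm : ∀ j : ℕ, ((j:ℝ)+1) ^ (ρ - 1/2) * Real.exp (-(Real.sqrt ((j:ℝ)+1) * s))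
      ≤ 27 * (((j:ℝ)+1) ^ 2)⁻¹ * ((j:ℝ)+1) ^ ρ * (s ^ 3)⁻¹ := by
    intro j
    have h1 : (1:ℝ) ≤ (j:ℝ)+1 := by have : (0:ℝ) ≤ (j:ℝ) := Nat.cast_nonneg j; linarith
    have h0 : (0:ℝ) < (j:ℝ)+1 := by positivity
    refine (ptBound hρ2 hs _ h1).trans (le_of_eq ?_)
    rw [show ρ - 2 = ρ + (-2:ℝ) by ring, Real.rpow_add h0, Real.rpow_neg h0.le,
      show ((2:ℝ)) = ((2:ℕ):ℝ) by norm_num, Real.rpow_natCast]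
    ring
  have hnonneg : ∀ j : ℕ, 0 ≤ ((j:ℝ)+1) ^ (ρ - 1/2) * Real.exp (-(Real.sqrt ((j:ℝ)+1) * s)) := by
    intro j; positivity
  have hspos : (0:ℝ) < s ^ (-1-2*ρ) := Real.rpow_pos_of_pos hs _
  rcases le_or_gt 1 s with hs1 | hs1
  · -- s ≥ 1
    have hb : ∀ j ∈ Finset.range L, ((j:ℝ)+1) ^ (ρ - 1/2) * Real.exp (-(Real.sqrt ((j:ℝ)+1) * s))
        ≤ 27 * (((j:ℝ)+1) ^ 2)⁻¹ * (s ^ 3)⁻¹ := by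
      intro j _
      refine (hterm j).trans ?_
      have h0 : (0:ℝ) < (j:ℝ)+1 := by positivity
      have : ((j:ℝ)+1) ^ ρ ≤ 1 := Real.rpow_le_one_of_one_le_of_nonpos (by have : (0:ℝ) ≤ (j:ℝ) := Nat.cast_nonneg j; linarith) hρ2.le
      calc 27 * (((j:ℝ)+1) ^ 2)⁻¹ * ((j:ℝ)+1) ^ ρ * (s ^ 3)⁻¹
          ≤ 27 * (((j:ℝ)+1) ^ 2)⁻¹ * 1 * (s ^ 3)⁻¹ := by
            apply mul_le_mul_of_nonneg_right _ (by positivity)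
            apply mul_le_mul_of_nonneg_left this (by positivity)
        _ = 27 * (((j:ℝ)+1) ^ 2)⁻¹ * (s ^ 3)⁻¹ := by ring
    calc ∑ j ∈ Finset.range L, ((j:ℝ)+1) ^ (ρ - 1/2) * Real.exp (-(Real.sqrt ((j:ℝ)+1) * s))
        ≤ ∑ j ∈ Finset.range L, 27 * (((j:ℝ)+1) ^ 2)⁻¹ * (s ^ 3)⁻¹ := Finset.sum_le_sum hb
      _ = 27 * (s ^ 3)⁻¹ * ∑ j ∈ Finset.range L, (((j:ℝ)+1) ^ 2)⁻¹ := by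
          rw [Finset.mul_sum]; apply Finset.sum_congr rfl; intro j _; ring
      _ ≤ 27 * (s ^ 3)⁻¹ * 2 := by
          apply mul_le_mul_of_nonneg_left (teleSum2 L) (by positivity)
      _ = 54 * (s ^ 3)⁻¹ := by ring
      _ = 54 * s ^ (-3:ℝ) := by
          rw [Real.rpow_neg hs.le, show ((3:ℝ)) = ((3:ℕ):ℝ) by norm_num, Real.rpow_natCast]
      _ ≤ 54 * s ^ (-1-2*ρ) := by
          apply mul_le_mul_of_nonneg_left _ (by norm_num)
          exact Real.rpow_le_rpow_of_exponent_le hs1 (by linarith)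
  · -- s < 1
    set M : ℕ := ⌈s ^ (-2:ℝ)⌉₊ with hMdef
    have hinv : s ^ (-2:ℝ) = (s ^ 2)⁻¹ := by
      rw [Real.rpow_neg hs.le, show ((2:ℝ)) = ((2:ℕ):ℝ) by norm_num, Real.rpow_natCast]
    have hs2pos : (0:ℝ) < s ^ (-2:ℝ) := Real.rpow_pos_of_pos hs _
    have hs2gt : (1:ℝ) < s ^ (-2:ℝ) := by
      rw [hinv]
      rw [lt_inv_comm₀ one_pos (by positivity)]
      nlinarith
    have hM1 : 1 ≤ M := Nat.one_le_ceil_iff.2 hs2pos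
    have hMge : s ^ (-2:ℝ) ≤ (M:ℝ) := Nat.le_ceil _
    have hMle : (M:ℝ) ≤ 2 * s ^ (-2:ℝ) := by
      have h2 : (M:ℝ) < s ^ (-2:ℝ) + 1 := Nat.ceil_lt_add_one hs2pos.le
      linarith
    have e3 : s ^ (-3:ℝ) = (s^3)⁻¹ := by
      rw [Real.rpow_neg hs.le, show ((3:ℝ)) = ((3:ℕ):ℝ) by norm_num, Real.rpow_natCast]
    have e2 : s ^ (2:ℝ) = s^2 := by
      rw [show ((2:ℝ)) = ((2:ℕ):ℝ) by norm_num, Real.rpow_natCast]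
    set L' := max L M with hL'
    have hLL' : L ≤ L' := le_max_left _ _
    have hML' : M ≤ L' := le_max_right _ _
    have hMpos : (0:ℝ) < (M:ℝ) := by exact_mod_cast hM1
    have piece1 : ∑ j ∈ Finset.range M, ((j:ℝ)+1) ^ (ρ - 1/2) *
        Real.exp (-(Real.sqrt ((j:ℝ)+1) * s)) ≤ 8 * s ^ (-1-2*ρ) := by
      have hstep : ∀ j ∈ Finset.range M, ((j:ℝ)+1) ^ (ρ - 1/2) *
          Real.exp (-(Real.sqrt ((j:ℝ)+1) * s)) ≤ ((j:ℝ)+1) ^ (ρ - 1/2) := by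
        intro j _
        have h1 : Real.exp (-(Real.sqrt ((j:ℝ)+1) * s)) ≤ 1 := by
          rw [Real.exp_le_one_iff]
          have : (0:ℝ) ≤ Real.sqrt ((j:ℝ)+1) * s := by positivity
          linarith
        exact mul_le_of_le_one_right (Real.rpow_nonneg (by positivity) _) h1
      have h2 := sumPow (q := ρ - 1/2) (by linarith) (by linarith) M
      have hq : 1 + (ρ - 1/2) = ρ + 1/2 := by ring
      rw [hq] at h2
      have hqpos : (0:ℝ) < ρ + 1/2 := by linarith
      calc ∑ j ∈ Finset.range M, ((j:ℝ)+1) ^ (ρ - 1/2) *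
            Real.exp (-(Real.sqrt ((j:ℝ)+1) * s))
          ≤ ∑ j ∈ Finset.range M, ((j:ℝ)+1) ^ (ρ - 1/2) := Finset.sum_le_sum hstep
        _ ≤ (M:ℝ) ^ (ρ + 1/2) / (ρ + 1/2) := h2
        _ ≤ 4 * (M:ℝ) ^ (ρ + 1/2) := by
            rw [div_le_iff₀ hqpos]
            nlinarith [Real.rpow_nonneg (Nat.cast_nonneg M : (0:ℝ) ≤ (M:ℝ)) (ρ + 1/2)]
        _ ≤ 4 * (2 * s ^ (-2:ℝ)) ^ (ρ + 1/2) := by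
            apply mul_le_mul_of_nonneg_left _ (by norm_num)
            exact Real.rpow_le_rpow (Nat.cast_nonneg M) hMle (by linarith)
        _ = 4 * (2 ^ (ρ + 1/2) * (s ^ (-2:ℝ)) ^ (ρ + 1/2)) := by
            rw [Real.mul_rpow (by norm_num) hs2pos.le]
        _ ≤ 4 * (2 * (s ^ (-2:ℝ)) ^ (ρ + 1/2)) := by
            apply mul_le_mul_of_nonneg_left _ (by norm_num)
            apply mul_le_mul_of_nonneg_right _ (Real.rpow_nonneg hs2pos.le _)
            calc (2:ℝ) ^ (ρ + 1/2) ≤ 2 ^ (1:ℝ) :=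
                  Real.rpow_le_rpow_of_exponent_le one_le_two (by linarith)
              _ = 2 := Real.rpow_one 2
        _ = 8 * s ^ (-1-2*ρ) := by
            rw [← Real.rpow_mul hs.le, show (-2:ℝ)*(ρ+1/2) = -1-2*ρ by ring]
            ring
    have piece2 : ∀ K : ℕ, ∑ i ∈ Finset.range K,
        (((M+i : ℕ):ℝ)+1) ^ (ρ - 1/2) * Real.exp (-(Real.sqrt (((M+i : ℕ):ℝ)+1) * s))
          ≤ 27 * s ^ (-1-2*ρ) := by
      intro K
      have hstep : ∀ i ∈ Finset.range K,
          (((M+i : ℕ):ℝ)+1) ^ (ρ - 1/2) * Real.exp (-(Real.sqrt (((M+i : ℕ):ℝ)+1) * s))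
            ≤ 27 * (M:ℝ) ^ ρ * (s^3)⁻¹ * (((M:ℝ)+i+1)^2)⁻¹ := by
        intro i _
        have hcast : ((M+i : ℕ):ℝ) = (M:ℝ) + i := by push_cast; ring
        rw [hcast]
        have h0 : (0:ℝ) < (M:ℝ)+i+1 := by positivity
        have h1 : (1:ℝ) ≤ (M:ℝ)+i+1 := by
          have : (0:ℝ) ≤ (i:ℝ) := Nat.cast_nonneg i; linarith
        refine (ptBound hρ2 hs _ h1).trans ?_
        have hsplit2 : ((M:ℝ)+i+1) ^ (ρ-2) = ((M:ℝ)+i+1) ^ ρ * (((M:ℝ)+i+1)^2)⁻¹ := by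
          rw [show ρ - 2 = ρ + (-2:ℝ) by ring, Real.rpow_add h0, Real.rpow_neg h0.le,
            show ((2:ℝ)) = ((2:ℕ):ℝ) by norm_num, Real.rpow_natCast]
        rw [hsplit2]
        have hbase : ((M:ℝ)+i+1) ^ ρ ≤ (M:ℝ) ^ ρ := by
          apply Real.rpow_le_rpow_of_nonpos hMpos _ hρ2.le
          have : (0:ℝ) ≤ (i:ℝ) := Nat.cast_nonneg i; linarith
        calc 27 * (((M:ℝ)+i+1) ^ ρ * (((M:ℝ)+i+1)^2)⁻¹) * (s^3)⁻¹
            ≤ 27 * ((M:ℝ) ^ ρ * (((M:ℝ)+i+1)^2)⁻¹) * (s^3)⁻¹ := by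
              apply mul_le_mul_of_nonneg_right _ (by positivity)
              apply mul_le_mul_of_nonneg_left _ (by norm_num)
              exact mul_le_mul_of_nonneg_right hbase (by positivity)
          _ = 27 * (M:ℝ) ^ ρ * (s^3)⁻¹ * (((M:ℝ)+i+1)^2)⁻¹ := by ring
      calc ∑ i ∈ Finset.range K,
          (((M+i : ℕ):ℝ)+1) ^ (ρ - 1/2) * Real.exp (-(Real.sqrt (((M+i : ℕ):ℝ)+1) * s))
          ≤ ∑ i ∈ Finset.range K, 27 * (M:ℝ) ^ ρ * (s^3)⁻¹ * (((M:ℝ)+i+1)^2)⁻¹ :=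
            Finset.sum_le_sum hstep
        _ = 27 * (M:ℝ) ^ ρ * (s^3)⁻¹ * ∑ i ∈ Finset.range K, (((M:ℝ)+i+1)^2)⁻¹ := by
            rw [Finset.mul_sum]
        _ ≤ 27 * (M:ℝ) ^ ρ * (s^3)⁻¹ * (1/(M:ℝ)) := by
            apply mul_le_mul_of_nonneg_left (teleSum M hM1 K) (by positivity)
        _ ≤ 27 * s ^ (-2*ρ) * (s^3)⁻¹ * (s^2) := by
            have hb1 : (M:ℝ) ^ ρ ≤ s ^ (-2*ρ) := by
              have := Real.rpow_le_rpow_of_nonpos hs2pos hMge hρ2.le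
              rwa [← Real.rpow_mul hs.le, show (-2:ℝ)*ρ = -2*ρ by ring] at this
            have hb2 : 1/(M:ℝ) ≤ s^2 := by
              have h4 : ((M:ℝ))⁻¹ ≤ ((s^2)⁻¹)⁻¹ :=
                inv_anti₀ (by positivity) (by rw [← hinv]; exact hMge)
              rw [inv_inv] at h4
              rwa [one_div]
            have hMρ : (0:ℝ) ≤ (M:ℝ) ^ ρ := Real.rpow_nonneg hMpos.le _
            have hs3 : (0:ℝ) ≤ (s^3)⁻¹ := by positivity
            have h1M : (0:ℝ) ≤ 1/(M:ℝ) := by positivity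
            have hsρ : (0:ℝ) ≤ s ^ (-2*ρ) := Real.rpow_nonneg hs.le _
            nlinarith [mul_le_mul hb1 hb2 h1M hsρ]
        _ = 27 * s ^ (-1-2*ρ) := by
            rw [← e3, ← e2,
              show (27:ℝ) * s ^ (-2*ρ) * s ^ (-3:ℝ) * s ^ (2:ℝ) =
                27 * (s ^ (-2*ρ) * (s ^ (-3:ℝ) * s ^ (2:ℝ))) by ring,
              ← Real.rpow_add hs, ← Real.rpow_add hs,
              show -2*ρ + ((-3:ℝ) + 2) = -1-2*ρ by ring]
    calc ∑ j ∈ Finset.range L, ((j:ℝ)+1) ^ (ρ - 1/2) * Real.exp (-(Real.sqrt ((j:ℝ)+1) * s))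
        ≤ ∑ j ∈ Finset.range L', ((j:ℝ)+1) ^ (ρ - 1/2) * Real.exp (-(Real.sqrt ((j:ℝ)+1) * s)) := by
          apply Finset.sum_le_sum_of_subset_of_nonneg (Finset.range_subset_range.2 hLL')
          intro j _ _; exact hnonneg j
      _ = ∑ j ∈ Finset.range M, ((j:ℝ)+1) ^ (ρ - 1/2) * Real.exp (-(Real.sqrt ((j:ℝ)+1) * s))
          + ∑ i ∈ Finset.range (L' - M),
            (((M+i : ℕ):ℝ)+1) ^ (ρ - 1/2) * Real.exp (-(Real.sqrt (((M+i : ℕ):ℝ)+1) * s)) := by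
          obtain ⟨K, hK⟩ : ∃ K, L' = M + K := ⟨L' - M, (Nat.add_sub_cancel' hML').symm⟩
          rw [hK, Finset.sum_range_add, Nat.add_sub_cancel_left]
      _ ≤ 8 * s ^ (-1-2*ρ) + 27 * s ^ (-1-2*ρ) := add_le_add piece1 (piece2 _)
      _ ≤ 54 * s ^ (-1-2*ρ) := by linarith



lemma leftSum {ρ : ℝ} (hρ1 : -(1/4:ℝ) ≤ ρ) (hρ2 : ρ < 0) (p : ℕ) :
    ∑ k ∈ Finset.range p, ((k:ℝ)+1) ^ ρ / (((p:ℝ)+1-k) ^ ((1:ℝ)/2))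
      ≤ 7 * (((p:ℝ)+1) ^ ρ * ((p:ℝ)+1) ^ ((1:ℝ)/2)) := by
  set K : ℝ := (p:ℝ)+1 with hK
  have hK1 : (1:ℝ) ≤ K := by rw [hK]; linarith [Nat.cast_nonneg (α := ℝ) p]
  have hK0 : (0:ℝ) < K := by linarith
  have hKρ : (0:ℝ) ≤ K ^ ρ := Real.rpow_nonneg hK0.le _
  have hKh : (0:ℝ) < K ^ ((1:ℝ)/2) := Real.rpow_pos_of_pos hK0 _
  have hpt : ∀ k ∈ Finset.range p, ((k:ℝ)+1) ^ ρ / ((K-k) ^ ((1:ℝ)/2))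
      ≤ 2*K^ρ * (((K-(k:ℝ)) ^ ((1:ℝ)/2))⁻¹) + 2*((k:ℝ)+1)^ρ / K^((1:ℝ)/2) := by
    intro k hk
    have hkp : (k:ℝ)+1 ≤ (p:ℝ) := by exact_mod_cast Finset.mem_range.1 hk
    have hk0 : (0:ℝ) ≤ (k:ℝ) := Nat.cast_nonneg k
    have hKk : (2:ℝ) ≤ K - k := by rw [hK]; linarith
    have hKkpos : (0:ℝ) < K - k := by linarith
    have hKkh : (0:ℝ) < (K-(k:ℝ)) ^ ((1:ℝ)/2) := Real.rpow_pos_of_pos hKkpos _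
    have hterm2 : (0:ℝ) ≤ 2*((k:ℝ)+1)^ρ / K^((1:ℝ)/2) := by positivity
    have hterm1 : (0:ℝ) ≤ 2*K^ρ * (((K-(k:ℝ)) ^ ((1:ℝ)/2))⁻¹) := by positivity
    rcases le_or_gt K (2*((k:ℝ)+1)) with hcase | hcase
    · -- k+1 ≥ K/2
      have h1 : ((k:ℝ)+1)^ρ ≤ (K/2)^ρ :=
        Real.rpow_le_rpow_of_nonpos (by positivity) (by linarith) hρ2.le
      have h2 : (K/2)^ρ = K^ρ / 2^ρ := Real.div_rpow hK0.le (by norm_num) ρ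
      have h3 : (1:ℝ)/2 ≤ (2:ℝ)^ρ := by
        calc (1:ℝ)/2 = 2^(-1:ℝ) := by rw [Real.rpow_neg_one]; norm_num
          _ ≤ 2^ρ := Real.rpow_le_rpow_of_exponent_le one_le_two (by linarith)
      have h4 : K^ρ / 2^ρ ≤ K^ρ / (1/2) :=
        div_le_div_of_nonneg_left hKρ (by norm_num) h3
      have h5 : ((k:ℝ)+1)^ρ ≤ 2*K^ρ := by
        rw [h2] at h1
        calc ((k:ℝ)+1)^ρ ≤ K^ρ/(1/2) := h1.trans h4
          _ = 2*K^ρ := by ring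
      have : ((k:ℝ)+1) ^ ρ / ((K-k) ^ ((1:ℝ)/2)) ≤ 2*K^ρ / ((K-(k:ℝ)) ^ ((1:ℝ)/2)) := by
        gcongr
      refine this.trans ?_
      rw [div_eq_mul_inv]
      linarith
    · -- K - k ≥ K/2
      have hc2 : K/2 ≤ K - k := by nlinarith
      have h1 : (K/2) ^ ((1:ℝ)/2) ≤ (K-(k:ℝ)) ^ ((1:ℝ)/2) :=
        Real.rpow_le_rpow (by positivity) hc2 (by norm_num)
      have h2 : ((k:ℝ)+1) ^ ρ / ((K-k) ^ ((1:ℝ)/2)) ≤ ((k:ℝ)+1) ^ ρ / ((K/2) ^ ((1:ℝ)/2)) :=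
        div_le_div_of_nonneg_left (Real.rpow_nonneg (by positivity) _)
          (Real.rpow_pos_of_pos (by positivity) _) h1
      have h3 : (K/2) ^ ((1:ℝ)/2) = K ^ ((1:ℝ)/2) / 2 ^ ((1:ℝ)/2) :=
        Real.div_rpow hK0.le (by norm_num) _
      have h4 : ((k:ℝ)+1) ^ ρ / ((K/2) ^ ((1:ℝ)/2))
          = ((k:ℝ)+1) ^ ρ * 2 ^ ((1:ℝ)/2) / K ^ ((1:ℝ)/2) := by
        rw [h3]; field_simp
      have h5 : (2:ℝ) ^ ((1:ℝ)/2) ≤ 2 := by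
        calc (2:ℝ) ^ ((1:ℝ)/2) ≤ 2 ^ (1:ℝ) :=
            Real.rpow_le_rpow_of_exponent_le one_le_two (by norm_num)
          _ = 2 := Real.rpow_one 2
      have h6' : ((k:ℝ)+1)^ρ * 2^((1:ℝ)/2) ≤ 2*((k:ℝ)+1)^ρ := by
        have := mul_le_mul_of_nonneg_left h5
          (Real.rpow_nonneg (by positivity : (0:ℝ) ≤ (k:ℝ)+1) ρ)
        nlinarith [Real.rpow_nonneg (by positivity : (0:ℝ) ≤ (k:ℝ)+1) ρ]
      have h6 : ((k:ℝ)+1) ^ ρ * 2 ^ ((1:ℝ)/2) / K ^ ((1:ℝ)/2)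
          ≤ 2*((k:ℝ)+1)^ρ / K^((1:ℝ)/2) := div_le_div_of_nonneg_right h6' hKh.le
      refine (h2.trans (le_of_eq h4)).trans (h6.trans ?_)
      linarith
  have hsum := Finset.sum_le_sum hpt
  rw [Finset.sum_add_distrib] at hsum
  have hq12 : (-1:ℝ) < -(1:ℝ)/2 := by norm_num
  have hq12' : (-(1:ℝ)/2 : ℝ) < 0 := by norm_num
  -- S1 bound
  have hS1 : ∑ k ∈ Finset.range p, 2*K^ρ * (((K-(k:ℝ)) ^ ((1:ℝ)/2))⁻¹)
      ≤ 2*K^ρ * (2 * K ^ ((1:ℝ)/2)) := by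
    rw [← Finset.mul_sum]
    apply mul_le_mul_of_nonneg_left _ (by positivity)
    have hrefl := Finset.sum_range_reflect (fun k : ℕ => ((K-(k:ℝ)) ^ ((1:ℝ)/2))⁻¹) p
    rw [← hrefl]
    have hptw : ∀ j ∈ Finset.range p,
        ((K-((p-1-j : ℕ):ℝ)) ^ ((1:ℝ)/2))⁻¹ ≤ ((j:ℝ)+1) ^ (-(1:ℝ)/2) := by
      intro j hj
      have hjp : j < p := Finset.mem_range.1 hj
      have hcast : ((p-1-j : ℕ):ℝ) = (p:ℝ)-(j+1) := by
        rw [show p - 1 - j = p - (j+1) by omega, Nat.cast_sub (by omega : j+1 ≤ p)]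
        push_cast; ring
      rw [hcast, show K - ((p:ℝ)-((j:ℝ)+1)) = (j:ℝ)+2 by rw [hK]; ring]
      rw [neg_div, Real.rpow_neg (by positivity : (0:ℝ) ≤ (j:ℝ)+1)]
      apply inv_anti₀ (Real.rpow_pos_of_pos (by positivity) _)
      exact Real.rpow_le_rpow (by positivity) (by linarith [Nat.cast_nonneg (α := ℝ) j]) (by norm_num)
    calc ∑ j ∈ Finset.range p, ((K-((p-1-j : ℕ):ℝ)) ^ ((1:ℝ)/2))⁻¹
        ≤ ∑ j ∈ Finset.range p, ((j:ℝ)+1) ^ (-(1:ℝ)/2) := Finset.sum_le_sum hptw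
      _ ≤ (p:ℝ) ^ (1 + -(1:ℝ)/2) / (1 + -(1:ℝ)/2) := sumPow hq12 hq12' p
      _ = 2 * (p:ℝ) ^ ((1:ℝ)/2) := by rw [show (1 + -(1:ℝ)/2) = (1:ℝ)/2 by norm_num]; ring
      _ ≤ 2 * K ^ ((1:ℝ)/2) := by
          apply mul_le_mul_of_nonneg_left _ (by norm_num)
          exact Real.rpow_le_rpow (Nat.cast_nonneg p) (by rw [hK]; linarith) (by norm_num)
  -- S2 bound
  have hS2 : ∑ k ∈ Finset.range p, 2*((k:ℝ)+1)^ρ / K^((1:ℝ)/2)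
      ≤ 2 / K^((1:ℝ)/2) * ((4:ℝ)/3 * K ^ (1+ρ)) := by
    have : ∀ k ∈ Finset.range p,
        2*((k:ℝ)+1)^ρ / K^((1:ℝ)/2) = 2 / K^((1:ℝ)/2) * ((k:ℝ)+1)^ρ := by
      intro k _; ring
    rw [Finset.sum_congr rfl this, ← Finset.mul_sum]
    apply mul_le_mul_of_nonneg_left _ (by positivity)
    calc ∑ k ∈ Finset.range p, ((k:ℝ)+1)^ρ
        ≤ (p:ℝ) ^ (1+ρ) / (1+ρ) := sumPow (by linarith) hρ2 p
      _ ≤ K ^ (1+ρ) / (1+ρ) := by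
          apply div_le_div_of_nonneg_right
            (Real.rpow_le_rpow (Nat.cast_nonneg p) (by rw [hK]; linarith) (by linarith)) (by linarith)
      _ ≤ (4:ℝ)/3 * K ^ (1+ρ) := by
          rw [div_le_iff₀ (by linarith : (0:ℝ) < 1+ρ)]
          nlinarith [Real.rpow_nonneg hK0.le (1+ρ)]
  have hKK : 2 / K^((1:ℝ)/2) * ((4:ℝ)/3 * K ^ (1+ρ)) = 8/3 * (K^ρ * K^((1:ℝ)/2)) := by
    have h1 : K ^ (1+ρ) = K^ρ * (K^((1:ℝ)/2) * K^((1:ℝ)/2)) := by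
      rw [show (1+ρ) = ρ + ((1:ℝ)/2 + (1:ℝ)/2) by ring, Real.rpow_add hK0,
        Real.rpow_add hK0]
    rw [h1]; field_simp; ring
  have hfin : (0:ℝ) ≤ K^ρ * K^((1:ℝ)/2) := by positivity
  calc ∑ k ∈ Finset.range p, ((k:ℝ)+1) ^ ρ / (((p:ℝ)+1-k) ^ ((1:ℝ)/2))
      = ∑ k ∈ Finset.range p, ((k:ℝ)+1) ^ ρ / ((K-k) ^ ((1:ℝ)/2)) := by rw [hK]
    _ ≤ _ := hsum
    _ ≤ 2*K^ρ * (2 * K ^ ((1:ℝ)/2)) + 2 / K^((1:ℝ)/2) * ((4:ℝ)/3 * K ^ (1+ρ)) :=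
        add_le_add hS1 hS2
    _ = 4 * (K^ρ * K^((1:ℝ)/2)) + 8/3 * (K^ρ * K^((1:ℝ)/2)) := by rw [hKK]; ring
    _ ≤ 7 * (K^ρ * K^((1:ℝ)/2)) := by linarith
    _ = 7 * (((p:ℝ)+1) ^ ρ * ((p:ℝ)+1) ^ ((1:ℝ)/2)) := by rw [hK]


lemma termBound {z : ℂ} (hzim : z.im ≠ 0) {ρ : ℝ} (hρ2 : ρ < 0) {s : ℝ} (hs : 0 ≤ s)
    (lam : ℝ) {b c e : ℝ} (hb : 0 < b) (hblam : b ≤ lam)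
    (hc : 0 < c) (hcabs : c ≤ ‖z - lam‖)
    (he : Real.exp (-(upperSqrt (z - lam)).im * s) ≤ e) :
    lam ^ ρ * Real.exp (-(upperSqrt (z - lam)).im * s) / ‖z - lam‖ ^ ((1:ℝ)/2)
      ≤ b ^ ρ * e / c ^ ((1:ℝ)/2) := by
  have hexp0 : (0:ℝ) < Real.exp (-(upperSqrt (z - lam)).im * s) := Real.exp_pos _
  apply div_le_div₀ (mul_nonneg (Real.rpow_nonneg hb.le _) (hexp0.le.trans he))
  · exact mul_le_mul (Real.rpow_le_rpow_of_nonpos hb hblam hρ2.le) he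
      hexp0.le (Real.rpow_nonneg hb.le _)
  · exact Real.rpow_pos_of_pos hc _
  · exact Real.rpow_le_rpow hc.le hcabs (by norm_num)

/-- For `d = 2n + 1`, `λ_k = 2k + n`, `ρ ∈ [-1/(d+1), 0)`, and `z` in the strip around
`λ_{k0}` with `0 < |Im z| < 1` and `δ(z) = dist(z, {λ_k}) > 0`, there is `C` such that
`∑_k λ_k^ρ e^{-Im√(z-λ_k)|t|}/|z-λ_k|^{1/2} ≤ C (|t|^{-1-2ρ} + k₀^ρ (k₀^{1/2} + δ(z)^{-1/2}))`. -/
theorem stmt8 (n : ℕ) (hn : 1 ≤ n) (ρ : ℝ)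
    (hρ1 : -(1 / (2 * (n : ℝ) + 2)) ≤ ρ) (hρ2 : ρ < 0) :
    ∃ C > (0 : ℝ), ∀ (k0 : ℕ) (z : ℂ) (t : ℝ), 1 ≤ k0 → t ≠ 0 →
      |z.re - (2 * k0 + n : ℝ)| ≤ 1 → 0 < |z.im| → |z.im| < 1 →
      0 < Metric.infDist z {w : ℂ | ∃ k : ℕ, w = ((2 * k + n : ℝ) : ℂ)} →
      (∑' k : ℕ, (2 * k + n : ℝ) ^ ρ *
          Real.exp (-(upperSqrt (z - ((2 * k + n : ℝ) : ℂ))).im * |t|) /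
          ‖z - ((2 * k + n : ℝ) : ℂ)‖ ^ ((1 : ℝ) / 2))
        ≤ C * (|t| ^ (-1 - 2 * ρ) +
            (k0 : ℝ) ^ ρ * ((k0 : ℝ) ^ ((1 : ℝ) / 2) +
              (Metric.infDist z {w : ℂ | ∃ k : ℕ, w = ((2 * k + n : ℝ) : ℂ)})
                ^ (-(1 : ℝ) / 2))) := by
  have hn1 : (1:ℝ) ≤ (n:ℝ) := by exact_mod_cast hn
  have hρ14 : -(1/4:ℝ) ≤ ρ := by
    have h1 : (4:ℝ) ≤ 2*(n:ℝ)+2 := by linarith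
    have h2 : 1/(2*(n:ℝ)+2) ≤ 1/4 := by
      apply one_div_le_one_div_of_le (by norm_num) h1
    linarith
  refine ⟨54, by norm_num, ?_⟩
  intro k0 z t hk0 ht hre him0 him1 hδ
  obtain ⟨p, rfl⟩ : ∃ p, k0 = p + 1 := ⟨k0 - 1, by omega⟩
  set δ := Metric.infDist z {w : ℂ | ∃ k : ℕ, w = ((2 * k + n : ℝ) : ℂ)} with hδdef
  set s := |t| with hsdef
  have hs : 0 < s := abs_pos.2 ht
  have hzim : z.im ≠ 0 := by
    intro h; rw [h] at him0; simp at him0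
  have hwim : ∀ lam : ℝ, (z - (lam:ℂ)).im = z.im := by
    intro lam; simp [Complex.sub_im]
  have hwne : ∀ lam : ℝ, z - (lam:ℂ) ≠ 0 := by
    intro lam h
    apply hzim; rw [← hwim lam, h]; rfl
  have hzre1 : z.re ≤ 2*(p:ℝ)+2+(n:ℝ)+1 := by
    have := (abs_le.1 hre).2; push_cast at this ⊢; linarith
  have hzre2 : 2*(p:ℝ)+2+(n:ℝ)-1 ≤ z.re := by
    have := (abs_le.1 hre).1; push_cast at this ⊢; linarith
  have hp0 : (0:ℝ) ≤ (p:ℝ) := Nat.cast_nonneg p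
  have hk0c : ((p+1 : ℕ):ℝ) = (p:ℝ)+1 := by push_cast; ring
  have hk0pos : (0:ℝ) < (p:ℝ)+1 := by linarith
  have hexple1 : ∀ lam : ℝ, Real.exp (-(upperSqrt (z - (lam:ℂ))).im * s) ≤ 1 := by
    intro lam
    rw [Real.exp_le_one_iff]
    have h1 := upperSqrt_im_nonneg (z - (lam:ℂ))
    nlinarith
  -- apply the partial-sum criterion
  apply Real.tsum_le_of_sum_range_le
  · intro k
    apply div_nonneg
    · exact mul_nonneg (Real.rpow_nonneg (by positivity) _) (Real.exp_pos _).le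
    · exact Real.rpow_nonneg (norm_nonneg _) _
  intro N
  set F : ℕ → ℝ := fun k => (2 * k + n : ℝ) ^ ρ *
      Real.exp (-(upperSqrt (z - ((2 * k + n : ℝ) : ℂ))).im * s) /
      ‖z - ((2 * k + n : ℝ) : ℂ)‖ ^ ((1 : ℝ) / 2) with hF
  have hF0 : ∀ k, 0 ≤ F k := by
    intro k
    rw [hF]
    apply div_nonneg
    · exact mul_nonneg (Real.rpow_nonneg (by positivity) _) (Real.exp_pos _).le
    · exact Real.rpow_nonneg (norm_nonneg _) _
  -- enlarge the range
  have hNle : N ≤ max N (p+2) := le_max_left _ _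
  obtain ⟨T, hT⟩ : ∃ T, max N (p+2) = (p+2) + T :=
    ⟨max N (p+2) - (p+2), by omega⟩
  have henlarge : ∑ k ∈ Finset.range N, F k ≤ ∑ k ∈ Finset.range ((p+2)+T), F k := by
    rw [← hT]
    exact Finset.sum_le_sum_of_subset_of_nonneg (Finset.range_subset_range.2 hNle)
      (fun k _ _ => hF0 k)
  rw [Finset.sum_range_add, Finset.sum_range_succ, Finset.sum_range_succ] at henlarge
  -- left piece
  have hleft : ∑ k ∈ Finset.range p, F k
      ≤ 7 * (((p:ℝ)+1) ^ ρ * ((p:ℝ)+1) ^ ((1:ℝ)/2)) := by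
    refine (Finset.sum_le_sum ?_).trans (leftSum hρ14 hρ2 p)
    intro k hk
    have hkp : k < p := Finset.mem_range.1 hk
    have hkpr : (k:ℝ) ≤ (p:ℝ)-1 := by
      have : (k:ℝ)+1 ≤ (p:ℝ) := by exact_mod_cast hkp
      linarith
    have hk0' : (0:ℝ) ≤ (k:ℝ) := Nat.cast_nonneg k
    have hb : (0:ℝ) < (k:ℝ)+1 := by linarith
    have hblam : (k:ℝ)+1 ≤ 2*(k:ℝ)+(n:ℝ) := by linarith
    have hcpos : (0:ℝ) < (p:ℝ)+1-(k:ℝ) := by linarith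
    have hcabs : (p:ℝ)+1-(k:ℝ) ≤ ‖z - ((2 * k + n : ℝ) : ℂ)‖ := by
      have hre' : (z - ((2 * k + n : ℝ) : ℂ)).re = z.re - (2*(k:ℝ)+(n:ℝ)) := by
        simp [Complex.sub_re]
      calc (p:ℝ)+1-(k:ℝ) ≤ z.re - (2*(k:ℝ)+(n:ℝ)) := by linarith
        _ ≤ |(z - ((2 * k + n : ℝ) : ℂ)).re| := by rw [hre']; exact le_abs_self _
        _ ≤ ‖z - ((2 * k + n : ℝ) : ℂ)‖ := Complex.abs_re_le_norm _
    have := termBound hzim hρ2 hs.le (2*(k:ℝ)+(n:ℝ)) hb hblam hcpos hcabs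
      (hexple1 (2*(k:ℝ)+(n:ℝ)))
    rw [hF]
    simp only []
    refine this.trans (le_of_eq ?_)
    rw [mul_one]
  -- near pieces
  have hnear : ∀ k : ℕ, (p:ℝ)+1 ≤ 2*(k:ℝ)+(n:ℝ) → F k ≤ ((p:ℝ)+1) ^ ρ * δ ^ (-(1:ℝ)/2) := by
    intro k hblam
    have hcabs : δ ≤ ‖z - ((2 * k + n : ℝ) : ℂ)‖ := by
      rw [hδdef, ← Complex.dist_eq]
      exact Metric.infDist_le_dist_of_mem ⟨k, rfl⟩
    have := termBound hzim hρ2 hs.le (2*(k:ℝ)+(n:ℝ)) hk0pos hblam hδ hcabs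
      (hexple1 (2*(k:ℝ)+(n:ℝ)))
    rw [hF]
    simp only []
    refine this.trans (le_of_eq ?_)
    rw [mul_one, neg_div, Real.rpow_neg (le_of_lt hδ), div_eq_mul_inv]
  -- tail piece
  have htail : ∑ j ∈ Finset.range T, F ((p+2)+j) ≤ 54 * s ^ (-1-2*ρ) := by
    refine (Finset.sum_le_sum ?_).trans (tailSum hρ14 hρ2 hs T)
    intro j hj
    have hj0 : (0:ℝ) ≤ (j:ℝ) := Nat.cast_nonneg j
    have hb : (0:ℝ) < (j:ℝ)+1 := by linarith
    set lam : ℝ := 2 * ((p+2+j : ℕ):ℝ) + (n:ℝ) with hlam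
    have hlamc : lam = 2*(p:ℝ)+4+2*(j:ℝ)+(n:ℝ) := by rw [hlam]; push_cast; ring
    have hblam : (j:ℝ)+1 ≤ lam := by rw [hlamc]; linarith
    have hrele : (j:ℝ)+1 ≤ -((z - (lam:ℂ)).re) := by
      have hre' : (z - (lam:ℂ)).re = z.re - lam := by simp [Complex.sub_re]
      rw [hre', hlamc]; linarith
    have him := upperSqrt_im_ge (w := z - (lam:ℂ))
      (by rw [hwim]; exact hzim) (by positivity : (0:ℝ) ≤ (j:ℝ)+1) hrele
    have hsqrt : Real.sqrt ((j:ℝ)+1) = ((j:ℝ)+1) ^ ((1:ℝ)/2) := Real.sqrt_eq_rpow _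
    have he : Real.exp (-(upperSqrt (z - (lam:ℂ))).im * s)
        ≤ Real.exp (-(Real.sqrt ((j:ℝ)+1) * s)) := by
      apply Real.exp_le_exp.2
      have := mul_le_mul_of_nonneg_right him hs.le
      linarith
    have hcabs : (j:ℝ)+1 ≤ ‖z - (lam:ℂ)‖ := by
      calc (j:ℝ)+1 ≤ -((z - (lam:ℂ)).re) := hrele
        _ ≤ |(z - (lam:ℂ)).re| := neg_le_abs _
        _ ≤ _ := Complex.abs_re_le_norm _
    have hbnd := termBound hzim hρ2 hs.le lam hb hblam hb hcabs he
    have hFeq : F ((p+2)+j) = lam ^ ρ *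
        Real.exp (-(upperSqrt (z - (lam:ℂ))).im * s) /
        ‖z - (lam:ℂ)‖ ^ ((1:ℝ)/2) := by
      rw [hF]
    rw [hFeq]
    refine hbnd.trans (le_of_eq ?_)
    rw [Real.rpow_sub hb, hsqrt]
    ring
  -- near-term instantiations
  have hnear1 : F p ≤ ((p:ℝ)+1) ^ ρ * δ ^ (-(1:ℝ)/2) := hnear p (by linarith)
  have hnear2 : F (p+1) ≤ ((p:ℝ)+1) ^ ρ * δ ^ (-(1:ℝ)/2) := by
    apply hnear (p+1)
    push_cast; linarith
  -- combine
  have htotal : ∑ k ∈ Finset.range N, F k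
      ≤ 7 * (((p:ℝ)+1) ^ ρ * ((p:ℝ)+1) ^ ((1:ℝ)/2)) + 2 * (((p:ℝ)+1) ^ ρ * δ ^ (-(1:ℝ)/2))
        + 54 * s ^ (-1-2*ρ) := by
    refine henlarge.trans ?_
    have := add_le_add (add_le_add (add_le_add hleft hnear1) hnear2) htail
    linarith
  refine htotal.trans ?_
  rw [hk0c]
  have hA : (0:ℝ) ≤ ((p:ℝ)+1) ^ ρ * ((p:ℝ)+1) ^ ((1:ℝ)/2) := by positivity
  have hB : (0:ℝ) ≤ ((p:ℝ)+1) ^ ρ * δ ^ (-(1:ℝ)/2) := by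
    have h1 : (0:ℝ) ≤ δ ^ (-(1:ℝ)/2) := Real.rpow_nonneg hδ.le _
    positivity
  have hS : (0:ℝ) ≤ s ^ (-1-2*ρ) := Real.rpow_nonneg hs.le _
  nlinarith [hA, hB, hS]
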